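/- The coefficients of the Tutte polynomial of any finite graph are nonnegative integers. -/
import Mathlib


/-- A finite multigraph: vertices, edges, and an endpoint map allowing loops
and parallel edges. -/
structure Multigraph where
  V : Type
  E : Type
  [fintypeV : Fintype V]
  [fintypeE : Fintype E]
  [decEqV : DecidableEq V]
  [decEqE : DecidableEq E]
  ends : E → Sym2 V

attribute [instance] Multigraph.fintypeV Multigraph.fintypeE
  Multigraph.decEqV Multigraph.decEqE

namespace Multigraph

/-- The simple graph on `G.V` whose adjacency is induced by the edges in `H`. -/
def sg (G : Multigraph) (H : Finset G.E) : SimpleGraph G.V :=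
  SimpleGraph.fromRel (fun x y => ∃ e ∈ H, G.ends e = s(x, y))

/-- Number of connected components of the spanning subgraph `G|H`. -/
noncomputable def k (G : Multigraph) (H : Finset G.E) : ℕ :=
  Nat.card (G.sg H).ConnectedComponent

/-- The Tutte polynomial of `G` (via the Whitney rank / subset expansion, which is
the closed form of the deletion-contraction recursion), evaluated at `x`, `y`.
Here `k A - k univ = r(E) - r(A)` and `A.card + k A - card V = |A| - r(A)`. -/
noncomputable def tutteEval (G : Multigraph) {R : Type} [CommRing R] (x y : R) : R :=
  ∑ A : Finset G.E,
    (x - 1) ^ (G.k A - G.k Finset.univ) *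
      (y - 1) ^ (A.card + G.k A - Fintype.card G.V)

/-- A loop is an edge joining a vertex to itself. -/
def IsLoop (G : Multigraph) (e : G.E) : Prop := (G.ends e).IsDiag

/-- `e ∈ H` is a bridge of the spanning subgraph `G|H`: deleting it changes
(necessarily increases) the number of connected components. -/
def IsBridgeIn (G : Multigraph) (H : Finset G.E) (e : G.E) : Prop :=
  G.k (H.erase e) ≠ G.k H

/-- `e` is contained in a cycle of `G|H`: it is a loop (a cycle of length one) or its two
(distinct) endpoints remain connected after deleting it. -/
def MemCycle (G : Multigraph) (H : Finset G.E) (e : G.E) : Prop :=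
  ∃ x y, G.ends e = s(x, y) ∧ (x = y ∨ (G.sg (H.erase e)).Reachable x y)

/-- `G|H`: restriction (spanning subgraph) to the edges of `H`. -/
def restrict (G : Multigraph) (H : Finset G.E) : Multigraph where
  V := G.V
  E := {e : G.E // e ∈ H}
  ends := fun e => G.ends e.1

/-- `G/H`: contraction of all the edges of `H`. -/
noncomputable def contract (G : Multigraph) (H : Finset G.E) : Multigraph where
  V := (G.sg H).ConnectedComponent
  E := {e : G.E // e ∉ H}
  fintypeV := Fintype.ofFinite _
  decEqV := Classical.decEq _
  ends := fun e => (G.ends e.1).map (SimpleGraph.connectedComponentMk (G.sg H))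

end Multigraph

namespace Multigraph

variable {G : Multigraph}

instance (H : Finset G.E) : Finite (G.sg H).ConnectedComponent :=
  Finite.of_surjective (G.sg H).connectedComponentMk (fun c => c.exists_rep)

lemma sg_mono {A B : Finset G.E} (h : A ⊆ B) : G.sg A ≤ G.sg B := by
  intro x y hxy
  rw [sg, SimpleGraph.fromRel_adj] at hxy ⊢
  exact ⟨hxy.1, hxy.2.imp (fun ⟨e, he, h'⟩ => ⟨e, h he, h'⟩) (fun ⟨e, he, h'⟩ => ⟨e, h he, h'⟩)⟩

lemma sg_insert_adj {e : G.E} {S : Finset G.E} {x y : G.V} :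
    (G.sg (insert e S)).Adj x y ↔ (G.sg S).Adj x y ∨ (x ≠ y ∧ G.ends e = s(x, y)) := by
  simp only [sg, SimpleGraph.fromRel_adj, Finset.mem_insert]
  constructor
  · rintro ⟨hne, (⟨f, (rfl | hf), hev⟩ | ⟨f, (rfl | hf), hev⟩)⟩
    · exact Or.inr ⟨hne, hev⟩
    · exact Or.inl ⟨hne, Or.inl ⟨f, hf, hev⟩⟩
    · exact Or.inr ⟨hne, by rwa [Sym2.eq_swap] at hev⟩
    · exact Or.inl ⟨hne, Or.inr ⟨f, hf, hev⟩⟩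
  · rintro (⟨hne, (⟨f, hf, hev⟩ | ⟨f, hf, hev⟩)⟩ | ⟨hne, hev⟩)
    · exact ⟨hne, Or.inl ⟨f, Or.inr hf, hev⟩⟩
    · exact ⟨hne, Or.inr ⟨f, Or.inr hf, hev⟩⟩
    · exact ⟨hne, Or.inl ⟨e, Or.inl rfl, hev⟩⟩

/-- walk decomposition for one added edge -/
lemma reachable_insert_iff {e : G.E} {S : Finset G.E} {u v x y : G.V}
    (he : G.ends e = s(u, v)) :
    (G.sg (insert e S)).Reachable x y ↔
      (G.sg S).Reachable x y ∨
      ((G.sg S).Reachable x u ∧ (G.sg S).Reachable v y) ∨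
      ((G.sg S).Reachable x v ∧ (G.sg S).Reachable u y) := by
  constructor
  · rintro ⟨w⟩
    induction w with
    | nil => exact Or.inl (SimpleGraph.Reachable.refl _)
    | cons h p ih =>
      rename_i a b c
      rcases sg_insert_adj.mp h with hS | ⟨hne, hev⟩
      · have hab : (G.sg S).Reachable a b := hS.reachable
        rcases ih with h1 | ⟨h1, h2⟩ | ⟨h1, h2⟩
        · exact Or.inl (hab.trans h1)
        · exact Or.inr (Or.inl ⟨hab.trans h1, h2⟩)
        · exact Or.inr (Or.inr ⟨hab.trans h1, h2⟩)
      · rw [he] at hev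
        rcases Sym2.eq_iff.mp hev.symm with ⟨rfl, rfl⟩ | ⟨rfl, rfl⟩
        · -- a = u, b = v
          rcases ih with h1 | ⟨h1, h2⟩ | ⟨h1, h2⟩
          · exact Or.inr (Or.inl ⟨SimpleGraph.Reachable.refl _, h1⟩)
          · exact Or.inr (Or.inl ⟨SimpleGraph.Reachable.refl _, h2⟩)
          · exact Or.inl h2
        · -- a = v, b = u
          rcases ih with h1 | ⟨h1, h2⟩ | ⟨h1, h2⟩
          · exact Or.inr (Or.inr ⟨SimpleGraph.Reachable.refl _, h1⟩)
          · exact Or.inl h2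
          · exact Or.inr (Or.inr ⟨SimpleGraph.Reachable.refl _, h2⟩)
  · have hmono : G.sg S ≤ G.sg (insert e S) := sg_mono (Finset.subset_insert _ _)
    have huv : (G.sg (insert e S)).Reachable u v := by
      by_cases h : u = v
      · exact h ▸ SimpleGraph.Reachable.refl _
      · exact (sg_insert_adj.mpr (Or.inr ⟨h, he⟩)).reachable
    rintro (h1 | ⟨h1, h2⟩ | ⟨h1, h2⟩)
    · exact h1.mono hmono
    · exact ((h1.mono hmono).trans huv).trans (h2.mono hmono)
    · exact ((h1.mono hmono).trans huv.symm).trans (h2.mono hmono)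



open SimpleGraph in
lemma exists_ends (z : Sym2 α) : ∃ u v, z = s(u, v) :=
  z.ind (fun u v => ⟨u, v, rfl⟩)

lemma reachable_of_reachable_insert {e : G.E} {S : Finset G.E} {u v x y : G.V}
    (he : G.ends e = s(u, v)) (huv : u = v ∨ (G.sg S).Reachable u v)
    (h : (G.sg (insert e S)).Reachable x y) : (G.sg S).Reachable x y := by
  have huv' : (G.sg S).Reachable u v := by
    rcases huv with rfl | h'
    · exact SimpleGraph.Reachable.refl _
    · exact h'
  rcases (reachable_insert_iff he).mp h with h1 | ⟨h1, h2⟩ | ⟨h1, h2⟩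
  · exact h1
  · exact (h1.trans huv').trans h2
  · exact (h1.trans huv'.symm).trans h2

/-- surjection between component sets from reachability implication -/
lemma k_le_of_reachable_imp {A B : Finset G.E}
    (h : ∀ x y : G.V, (G.sg A).Reachable x y → (G.sg B).Reachable x y) :
    G.k B ≤ G.k A := by
  have hf : ∀ (x y : G.V) (p : (G.sg A).Walk x y), p.IsPath →
      (G.sg B).connectedComponentMk x = (G.sg B).connectedComponentMk y := by
    intro x y p _
    exact SimpleGraph.ConnectedComponent.sound (h x y ⟨p⟩)
  refine Nat.card_le_card_of_surjective
    (SimpleGraph.ConnectedComponent.lift (G.sg B).connectedComponentMk hf) ?_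
  intro c
  obtain ⟨x, rfl⟩ := c.exists_rep
  exact ⟨(G.sg A).connectedComponentMk x, rfl⟩

lemma k_mono {A B : Finset G.E} (h : A ⊆ B) : G.k B ≤ G.k A :=
  k_le_of_reachable_imp (fun _ _ hr => hr.mono (sg_mono h))

lemma k_insert_eq {e : G.E} {S : Finset G.E} {u v : G.V}
    (he : G.ends e = s(u, v)) (huv : u = v ∨ (G.sg S).Reachable u v) :
    G.k (insert e S) = G.k S := by
  refine le_antisymm (k_mono (Finset.subset_insert _ _)) ?_
  exact k_le_of_reachable_imp (fun x y hr => reachable_of_reachable_insert he huv hr)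

open Classical in
lemma k_insert_bridge {e : G.E} {S : Finset G.E} {u v : G.V}
    (he : G.ends e = s(u, v)) (hne : u ≠ v) (hnr : ¬ (G.sg S).Reachable u v) :
    G.k S = G.k (insert e S) + 1 := by
  set Gr := G.sg S with hGr
  set Gr' := G.sg (insert e S) with hGr'
  -- the map ψ : CC(S') → CC(S)
  have hwd : ∀ (x y : G.V) (p : Gr'.Walk x y), p.IsPath →
      Gr.connectedComponentMk (if Gr.Reachable x v then u else x) =
      Gr.connectedComponentMk (if Gr.Reachable y v then u else y) := by
    intro x y p _
    have hr : Gr'.Reachable x y := ⟨p⟩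
    rcases (reachable_insert_iff he).mp hr with h1 | ⟨h1, h2⟩ | ⟨h1, h2⟩
    · by_cases hx : Gr.Reachable x v
      · rw [if_pos hx, if_pos (h1.symm.trans hx)]
      · rw [if_neg hx, if_neg (fun hy => hx (h1.trans hy))]
        exact SimpleGraph.ConnectedComponent.sound h1
    · -- x ↝ u, v ↝ y
      have hy : Gr.Reachable y v := h2.symm
      rw [if_pos hy]
      by_cases hx : Gr.Reachable x v
      · rw [if_pos hx]
      · rw [if_neg hx]
        exact SimpleGraph.ConnectedComponent.sound h1
    · -- x ↝ v, u ↝ y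
      have hx : Gr.Reachable x v := h1
      rw [if_pos hx]
      have hy : ¬ Gr.Reachable y v := fun hy => hnr (h2.trans hy)
      rw [if_neg hy]
      exact SimpleGraph.ConnectedComponent.sound h2
  let ψ : Gr'.ConnectedComponent → Gr.ConnectedComponent :=
    SimpleGraph.ConnectedComponent.lift
      (fun x => Gr.connectedComponentMk (if Gr.Reachable x v then u else x)) hwd
  have hwd2 : ∀ (x y : G.V) (p : Gr.Walk x y), p.IsPath →
      Gr'.connectedComponentMk x = Gr'.connectedComponentMk y := by
    intro x y p _
    exact SimpleGraph.ConnectedComponent.sound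
      (SimpleGraph.Reachable.mono (sg_mono (Finset.subset_insert _ _)) ⟨p⟩)
  let φ : Gr.ConnectedComponent → Gr'.ConnectedComponent :=
    SimpleGraph.ConnectedComponent.lift Gr'.connectedComponentMk hwd2
  have hadj : Gr'.Adj u v := sg_insert_adj.mpr (Or.inr ⟨hne, he⟩)
  -- the equivalence Option CC' ≃ CC
  let f : Option Gr'.ConnectedComponent → Gr.ConnectedComponent := fun o =>
    o.elim (Gr.connectedComponentMk v) ψ
  let g : Gr.ConnectedComponent → Option Gr'.ConnectedComponent := fun c =>
    if c = Gr.connectedComponentMk v then none else some (φ c)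
  have hψ : ∀ x : G.V, ψ (Gr'.connectedComponentMk x)
      = Gr.connectedComponentMk (if Gr.Reachable x v then u else x) :=
    fun x => SimpleGraph.ConnectedComponent.lift_mk
  have hφ : ∀ x : G.V, φ (Gr.connectedComponentMk x) = Gr'.connectedComponentMk x :=
    fun x => SimpleGraph.ConnectedComponent.lift_mk
  have hfg : ∀ o, g (f o) = o := by
    rintro (_ | c)
    · show g (Gr.connectedComponentMk v) = none
      simp only [g, if_pos rfl]
    · obtain ⟨x, hx0⟩ := c.exists_rep
      subst hx0
      show g (ψ (Gr'.connectedComponentMk x)) = some (Gr'.connectedComponentMk x)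
      rw [hψ]
      by_cases hx : Gr.Reachable x v
      · rw [if_pos hx]
        have h1 : Gr.connectedComponentMk u ≠ Gr.connectedComponentMk v :=
          fun hc => hnr (SimpleGraph.ConnectedComponent.eq.mp hc)
        simp only [g, if_neg h1]
        rw [hφ]
        congr 1
        exact SimpleGraph.ConnectedComponent.sound
          (hadj.reachable.trans (SimpleGraph.Reachable.mono
            (sg_mono (Finset.subset_insert _ _)) hx.symm))
      · rw [if_neg hx]
        have h1 : Gr.connectedComponentMk x ≠ Gr.connectedComponentMk v :=
          fun hc => hx (SimpleGraph.ConnectedComponent.eq.mp hc)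
        simp only [g, if_neg h1]
        rw [hφ]
  have hgf : ∀ c, f (g c) = c := by
    intro c
    obtain ⟨x, hx0⟩ := c.exists_rep
    subst hx0
    by_cases hx : Gr.connectedComponentMk x = Gr.connectedComponentMk v
    · show f (g (Gr.connectedComponentMk x)) = _
      simp only [g, if_pos hx]
      exact hx.symm
    · show f (g (Gr.connectedComponentMk x)) = _
      simp only [g, if_neg hx]
      show ψ (φ (Gr.connectedComponentMk x)) = _
      rw [hφ, hψ]
      have hxv : ¬ Gr.Reachable x v := fun h => hx (SimpleGraph.ConnectedComponent.sound h)
      rw [if_neg hxv]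
      rfl
  have hequiv : Option Gr'.ConnectedComponent ≃ Gr.ConnectedComponent :=
    ⟨f, g, hfg, hgf⟩
  have : Nat.card Gr.ConnectedComponent = Nat.card (Option Gr'.ConnectedComponent) :=
    Nat.card_congr hequiv.symm
  rw [k, k, ← hGr, ← hGr', this, Finite.card_option]

lemma k_le_k_insert_add_one (e : G.E) (S : Finset G.E) :
    G.k S ≤ G.k (insert e S) + 1 := by
  obtain ⟨u, v, he⟩ := exists_ends (G.ends e)
  by_cases h : u = v ∨ (G.sg S).Reachable u v
  · rw [k_insert_eq he h]; omega
  · push_neg at h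
    rw [k_insert_bridge he h.1 h.2]

lemma k_le_card_add_k_union (A C : Finset G.E) : G.k C ≤ A.card + G.k (A ∪ C) := by
  classical
  induction A using Finset.induction with
  | empty => simp
  | @insert a s has ih =>
    rw [Finset.insert_union, Finset.card_insert_of_notMem has]
    have := G.k_le_k_insert_add_one a (s ∪ C)
    omega

lemma sg_empty : G.sg (∅ : Finset G.E) = ⊥ := by
  ext x y
  simp [sg, SimpleGraph.fromRel_adj]

lemma k_empty : G.k (∅ : Finset G.E) = Fintype.card G.V := by
  rw [k, sg_empty]
  have hb : Function.Bijective ((⊥ : SimpleGraph G.V).connectedComponentMk) := by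
    constructor
    · intro x y h
      exact SimpleGraph.reachable_bot.mp (SimpleGraph.ConnectedComponent.eq.mp h)
    · exact fun c => c.exists_rep
  rw [← Nat.card_congr (Equiv.ofBijective _ hb), Nat.card_eq_fintype_card]

open MvPolynomial in
lemma key (G : Multigraph) (H : Finset G.E) : ∀ C : Finset G.E,
    ∃ q : MvPolynomial (Fin 2) ℕ,
      MvPolynomial.map (Nat.castRingHom ℤ) q =
        ∑ A ∈ H.powerset,
          ((X 0 : MvPolynomial (Fin 2) ℤ) - 1) ^ (G.k (A ∪ C) - G.k (H ∪ C)) *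
            ((X 1 : MvPolynomial (Fin 2) ℤ) - 1) ^ (A.card + G.k (A ∪ C) - G.k C) := by
  induction H using Finset.induction with
  | empty =>
    intro C
    refine ⟨1, ?_⟩
    simp
  | @insert a s has ih =>
    intro C
    obtain ⟨u, v, he⟩ := exists_ends (G.ends a)
    rw [Finset.sum_powerset_insert has]
    have hins : ∀ A : Finset G.E, insert a A ∪ C = insert a (A ∪ C) :=
      fun A => Finset.insert_union a A C
    by_cases h1 : u = v ∨ (G.sg C).Reachable u v
    · -- loop / cycle-chord case: total = y * F(C, s)
      obtain ⟨q, hq⟩ := ih C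
      refine ⟨X 1 * q, ?_⟩
      have hbase : G.k (insert a s ∪ C) = G.k (s ∪ C) := by
        rw [hins]
        exact k_insert_eq he (h1.imp id
          (fun h => h.mono (sg_mono Finset.subset_union_right)))
      simp only [hbase]
      have hterm : ∀ A ∈ s.powerset,
          ((X 0 : MvPolynomial (Fin 2) ℤ) - 1) ^ (G.k (insert a A ∪ C) - G.k (s ∪ C)) *
            ((X 1 : MvPolynomial (Fin 2) ℤ) - 1) ^
              ((insert a A).card + G.k (insert a A ∪ C) - G.k C)
          = ((X 0 - 1) ^ (G.k (A ∪ C) - G.k (s ∪ C)) *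
              (X 1 - 1) ^ (A.card + G.k (A ∪ C) - G.k C)) * (X 1 - 1) := by
        intro A hA
        have hAs : A ⊆ s := Finset.mem_powerset.mp hA
        have haA : a ∉ A := fun h => has (hAs h)
        have hk : G.k (insert a A ∪ C) = G.k (A ∪ C) := by
          rw [hins]
          exact k_insert_eq he (h1.imp id
            (fun h => h.mono (sg_mono Finset.subset_union_right)))
        have hcard : (insert a A).card = A.card + 1 := Finset.card_insert_of_notMem haA
        have hle : G.k C ≤ A.card + G.k (A ∪ C) := G.k_le_card_add_k_union A C
        rw [hk, hcard]
        have hexp : A.card + 1 + G.k (A ∪ C) - G.k C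
            = (A.card + G.k (A ∪ C) - G.k C) + 1 := by omega
        rw [hexp, pow_succ]
        ring
      rw [Finset.sum_congr rfl hterm, ← Finset.sum_mul, ← hq, map_mul, MvPolynomial.map_X]
      ring
    · push_neg at h1
      obtain ⟨hne, hnrC⟩ := h1
      by_cases h2 : (G.sg (s ∪ C)).Reachable u v
      · -- ordinary edge: F(C, s) + F(insert a C, s)
        obtain ⟨q1, hq1⟩ := ih C
        obtain ⟨q2, hq2⟩ := ih (insert a C)
        refine ⟨q1 + q2, ?_⟩
        have hbase : G.k (insert a s ∪ C) = G.k (s ∪ C) := by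
          rw [hins]
          exact k_insert_eq he (Or.inr h2)
        simp only [hbase]
        have hkC : G.k C = G.k (insert a C) + 1 := k_insert_bridge he hne hnrC
        have hterm : ∀ A ∈ s.powerset,
            ((X 0 : MvPolynomial (Fin 2) ℤ) - 1) ^ (G.k (insert a A ∪ C) - G.k (s ∪ C)) *
              ((X 1 : MvPolynomial (Fin 2) ℤ) - 1) ^
                ((insert a A).card + G.k (insert a A ∪ C) - G.k C)
            = (X 0 - 1) ^ (G.k (A ∪ insert a C) - G.k (s ∪ insert a C)) *
              (X 1 - 1) ^ (A.card + G.k (A ∪ insert a C) - G.k (insert a C)) := by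
          intro A hA
          have hAs : A ⊆ s := Finset.mem_powerset.mp hA
          have haA : a ∉ A := fun h => has (hAs h)
          have hcard : (insert a A).card = A.card + 1 := Finset.card_insert_of_notMem haA
          have hu1 : A ∪ insert a C = insert a (A ∪ C) := Finset.union_insert a A C
          have hu2 : s ∪ insert a C = insert a (s ∪ C) := Finset.union_insert a s C
          have hk2 : G.k (insert a (s ∪ C)) = G.k (s ∪ C) := k_insert_eq he (Or.inr h2)
          rw [hins, hcard, hu1, hu2, hk2]
          congr 1
          congr 1
          omega
        rw [Finset.sum_congr rfl hterm, ← hq1, ← hq2, map_add]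
      · -- bridge: x * F(C, s)
        obtain ⟨q, hq⟩ := ih C
        refine ⟨X 0 * q, ?_⟩
        have hbase : G.k (s ∪ C) = G.k (insert a s ∪ C) + 1 := by
          rw [hins]
          exact k_insert_bridge he hne h2
        have hterm1 : ∀ A ∈ s.powerset,
            ((X 0 : MvPolynomial (Fin 2) ℤ) - 1) ^ (G.k (A ∪ C) - G.k (insert a s ∪ C)) *
              ((X 1 : MvPolynomial (Fin 2) ℤ) - 1) ^ (A.card + G.k (A ∪ C) - G.k C)
            = ((X 0 - 1) ^ (G.k (A ∪ C) - G.k (s ∪ C)) *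
                (X 1 - 1) ^ (A.card + G.k (A ∪ C) - G.k C)) * (X 0 - 1) := by
          intro A hA
          have hAs : A ⊆ s := Finset.mem_powerset.mp hA
          have hmono : G.k (s ∪ C) ≤ G.k (A ∪ C) :=
            k_mono (Finset.union_subset_union_left hAs)
          have hexp : G.k (A ∪ C) - G.k (insert a s ∪ C)
              = (G.k (A ∪ C) - G.k (s ∪ C)) + 1 := by omega
          rw [hexp, pow_succ]
          ring
        have hterm2 : ∀ A ∈ s.powerset,
            ((X 0 : MvPolynomial (Fin 2) ℤ) - 1) ^
                (G.k (insert a A ∪ C) - G.k (insert a s ∪ C)) *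
              ((X 1 : MvPolynomial (Fin 2) ℤ) - 1) ^
                ((insert a A).card + G.k (insert a A ∪ C) - G.k C)
            = (X 0 - 1) ^ (G.k (A ∪ C) - G.k (s ∪ C)) *
              (X 1 - 1) ^ (A.card + G.k (A ∪ C) - G.k C) := by
          intro A hA
          have hAs : A ⊆ s := Finset.mem_powerset.mp hA
          have haA : a ∉ A := fun h => has (hAs h)
          have hcard : (insert a A).card = A.card + 1 := Finset.card_insert_of_notMem haA
          have hk : G.k (A ∪ C) = G.k (insert a (A ∪ C)) + 1 := by
            refine k_insert_bridge he hne ?_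
            intro hr
            exact h2 (hr.mono (sg_mono (Finset.union_subset_union_left hAs)))
          rw [hins, hcard]
          congr 1
          · congr 1
            omega
          · congr 1
            omega
        rw [Finset.sum_congr rfl hterm1, Finset.sum_congr rfl hterm2,
          ← Finset.sum_mul, ← hq, map_mul, MvPolynomial.map_X]
        ring

end Multigraph

open Multigraph

/-- The coefficients of the Tutte polynomial of any finite graph are nonnegative
(integers): here the Tutte polynomial is the two-variable polynomial over `ℤ`
obtained by evaluating at the indeterminates `X 0`, `X 1`. -/
theorem tutte_coeff_nonneg (G : Multigraph) (m : (Fin 2) →₀ ℕ) :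
    0 ≤ MvPolynomial.coeff m
      (G.tutteEval (MvPolynomial.X 0 : MvPolynomial (Fin 2) ℤ) (MvPolynomial.X 1)) := by
  obtain ⟨q, hq⟩ := key G Finset.univ ∅
  simp only [Finset.union_empty, k_empty, Finset.powerset_univ] at hq
  rw [tutteEval, ← hq, MvPolynomial.coeff_map]
  simp only [Nat.castRingHom, RingHom.coe_mk, MonoidHom.coe_mk, OneHom.coe_mk]
  exact Int.natCast_nonneg _
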